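/- In the breadth-first construction of the grounded labelling, the function MM assigning to each in-labelled argument the value 2k+1 where k is minimal with x ∈ I_k, and to each out-labelled argument the value 2k where k is minimal with x ∈ O_k, is a valid min-max numbering of the grounded labelling. -/

import Mathlib

inductive Label where
  | inn | out | und
deriving DecidableEq

/-- A labelling is admissible if every in-labelled argument has all its attackers
labelled out, and every out-labelled argument has at least one in-labelled attacker. -/
def Admissible {Ar : Type*} (att : Ar → Ar → Prop) (L : Ar → Label) : Prop :=
  (∀ x, L x = Label.inn → ∀ y, att y x → L y = Label.out) ∧
  (∀ x, L x = Label.out → ∃ y, att y x ∧ L y = Label.inn)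

/-- A min-max numbering (with only natural-number values): in-arguments are numbered
1 + max of the numbers of their out-labelled attackers (max ∅ = 0), and out-arguments
1 + min of the numbers of their in-labelled attackers. -/
def IsMinMax {Ar : Type*} (att : Ar → Ar → Prop) (L : Ar → Label) (MM : Ar → ℕ) : Prop :=
  (∀ x, L x = Label.inn → MM x = sSup (MM '' {y | att y x ∧ L y = Label.out}) + 1) ∧
  (∀ x, L x = Label.out → MM x = sInf (MM '' {y | att y x ∧ L y = Label.inn}) + 1)

/-- Strongly admissible: admissible and admitting a min-max numbering with only
natural-number (finite) values. -/
def StronglyAdmissible {Ar : Type*} (att : Ar → Ar → Prop) (L : Ar → Label) : Prop :=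
  Admissible att L ∧ ∃ MM : Ar → ℕ, IsMinMax att L MM

/-- Complete labelling: admissible, and every undec argument has an undec attacker
and no in-labelled attacker. -/
def CompleteLab {Ar : Type*} (att : Ar → Ar → Prop) (L : Ar → Label) : Prop :=
  Admissible att L ∧
  ∀ x, L x = Label.und →
    (∃ y, att y x ∧ L y = Label.und) ∧ ∀ y, att y x → L y ≠ Label.inn

/-- The order on labellings: Lab1 ⊑ Lab2 iff in(Lab1) ⊆ in(Lab2) and out(Lab1) ⊆ out(Lab2). -/
def LabLe {Ar : Type*} (L1 L2 : Ar → Label) : Prop :=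
  (∀ x, L1 x = Label.inn → L2 x = Label.inn) ∧
  (∀ x, L1 x = Label.out → L2 x = Label.out)

/-!
Unfolding the recursion, `x ∈ I m` iff every attacker of `x` lies in some `O j` with `j ≤ m`,
and `x ∈ O m` iff some attacker of `x` lies in some `I j` with `j < m` (both also at `m = 0`,
because `O 0 = ∅`). So if `x` first appears in `I (m+1)`, all its attackers appear in `O` by stage
`m+1`, and one of them, witnessing `x ∉ I m`, first appears exactly there: the out-attackers of `x`
have maximal number `2(m+1)`. Dually, if `x` first appears in `O (m+1)`, an in-attacker first
appearing in `I j` forces `x ∈ O (j+1)`, so `j ≥ m`, and the attacker that put `x` into `O (m+1)`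
has `j ≤ m`: the in-attackers of `x` have minimal number `2m+1`.
-/

/-- `0` (the junk value of `sInf ∅`) when no stage contains `x`. -/
noncomputable def firstIndex {α : Type*} (S : ℕ → Set α) (x : α) : ℕ := sInf {k | x ∈ S k}

section firstIndex

variable {α : Type*} {S : ℕ → Set α} {x : α} {j k : ℕ}

theorem firstIndex_mem (hx : ∃ k, x ∈ S k) : x ∈ S (firstIndex S x) := Nat.sInf_mem hx

theorem firstIndex_le (hx : x ∈ S k) : firstIndex S x ≤ k := Nat.sInf_le hx

theorem notMem_of_lt_firstIndex (hj : j < firstIndex S x) : x ∉ S j := Nat.notMem_of_lt_sInf hj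

end firstIndex

structure IsBreadthFirst {Ar : Type*} (att : Ar → Ar → Prop) (I O : ℕ → Set Ar) : Prop where
  I_zero : I 0 = {x | ∀ y, ¬ att y x}
  O_zero : O 0 = ∅
  O_succ : ∀ k, O (k+1) = {y | ∃ x, att x y ∧ ∃ j ≤ k, x ∈ I j}
  I_succ : ∀ k, I (k+1) = {x | ∀ y, att y x → ∃ j, 1 ≤ j ∧ j ≤ k+1 ∧ y ∈ O j}

namespace IsBreadthFirst

variable {Ar : Type*} {att : Ar → Ar → Prop} {I O : ℕ → Set Ar} {x y : Ar} {m : ℕ}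

theorem mem_I_iff (h : IsBreadthFirst att I O) :
    x ∈ I m ↔ ∀ y, att y x → ∃ j ≤ m, y ∈ O j := by
  cases m with
  | zero => simp [h.I_zero, h.O_zero]
  | succ m =>
    rw [h.I_succ]
    refine forall₂_congr fun y _ => ⟨fun ⟨j, _, hj, hy⟩ => ⟨j, hj, hy⟩, fun ⟨j, hj, hy⟩ => ?_⟩
    obtain rfl | hj₀ := Nat.eq_zero_or_pos j
    · simp [h.O_zero] at hy
    · exact ⟨j, hj₀, hj, hy⟩

theorem mem_O_iff (h : IsBreadthFirst att I O) :
    x ∈ O m ↔ ∃ y, att y x ∧ ∃ j < m, y ∈ I j := by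
  cases m with
  | zero => simp [h.O_zero]
  | succ m => simp [h.O_succ]

theorem firstIndex_O_le_of_attacks (h : IsBreadthFirst att I O) (hx : ∃ k, x ∈ I k)
    (hyx : att y x) : firstIndex O y ≤ firstIndex I x := by
  obtain ⟨j, hj, hy⟩ := h.mem_I_iff.1 (firstIndex_mem hx) y hyx
  exact (firstIndex_le hy).trans hj

theorem firstIndex_O_le_succ_of_attacks (h : IsBreadthFirst att I O) (hy : ∃ k, y ∈ I k)
    (hyx : att y x) : firstIndex O x ≤ firstIndex I y + 1 :=
  firstIndex_le (h.mem_O_iff.2 ⟨y, hyx, _, Nat.lt_succ_self _, firstIndex_mem hy⟩)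

theorem firstIndex_O_ne_zero (h : IsBreadthFirst att I O) (hx : ∃ k, x ∈ O k) :
    firstIndex O x ≠ 0 := fun h₀ => by
  simpa [h₀, h.mem_O_iff] using firstIndex_mem hx

theorem sSup_outAttackers (h : IsBreadthFirst att I O) (hx : ∃ k, x ∈ I k) :
    sSup ((fun y => 2 * firstIndex O y) '' {y | att y x ∧ ∃ k, y ∈ O k}) =
      2 * firstIndex I x := by
  cases hn : firstIndex I x with
  | zero =>
    have hx₀ : x ∈ I 0 := hn ▸ firstIndex_mem hx
    have no_attackers : ∀ y, ¬ att y x := by simpa [h.I_zero] using hx₀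
    simp [no_attackers]
  | succ m =>
    have hxm : x ∉ I m := notMem_of_lt_firstIndex (by omega)
    rw [h.mem_I_iff] at hxm
    push Not at hxm
    obtain ⟨y, hyx, hy_late⟩ := hxm
    obtain ⟨j, -, hyj⟩ := h.mem_I_iff.1 (firstIndex_mem hx) y hyx
    have hy_first : firstIndex O y = m + 1 := by
      refine le_antisymm (hn ▸ h.firstIndex_O_le_of_attacks hx hyx) ?_
      by_contra! hlt
      exact hy_late _ (by omega) (firstIndex_mem ⟨j, hyj⟩)
    refine IsGreatest.csSup_eq ⟨⟨y, ⟨hyx, j, hyj⟩, by simp [hy_first]⟩, ?_⟩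
    rintro _ ⟨z, ⟨hzx, -⟩, rfl⟩
    simpa [hn] using h.firstIndex_O_le_of_attacks hx hzx

theorem sInf_inAttackers_add_one (h : IsBreadthFirst att I O) (hx : ∃ k, x ∈ O k) :
    sInf ((fun y => 2 * firstIndex I y + 1) '' {y | att y x ∧ ∃ k, y ∈ I k}) + 1 =
      2 * firstIndex O x := by
  obtain ⟨m, hm⟩ := Nat.exists_eq_add_one_of_ne_zero (h.firstIndex_O_ne_zero hx)
  have attackers_late : ∀ w, att w x → (∃ k, w ∈ I k) → m ≤ firstIndex I w := fun w hwx hw => by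
    have := h.firstIndex_O_le_succ_of_attacks hw hwx
    omega
  obtain ⟨y, hyx, j, hj, hyj⟩ := h.mem_O_iff.1 (hm ▸ firstIndex_mem hx)
  have hy_first : firstIndex I y = m :=
    le_antisymm ((firstIndex_le hyj).trans (by omega)) (attackers_late y hyx ⟨j, hyj⟩)
  have hleast : IsLeast ((fun y => 2 * firstIndex I y + 1) '' {y | att y x ∧ ∃ k, y ∈ I k})
      (2 * m + 1) := by
    refine ⟨⟨y, ⟨hyx, j, hyj⟩, by simp [hy_first]⟩, ?_⟩
    rintro _ ⟨w, ⟨hwx, hw⟩, rfl⟩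
    simpa using attackers_late w hwx hw
  rw [hleast.csInf_eq, hm]
  ring

end IsBreadthFirst

theorem breadthFirst_minMax_general
    {Ar : Type*} (att : Ar → Ar → Prop)
    (I O : ℕ → Set Ar)
    (hI0 : I 0 = {x | ∀ y, ¬ att y x})
    (hO0 : O 0 = ∅)
    (hO : ∀ k, O (k+1) = {y | ∃ x, att x y ∧ ∃ j ≤ k, x ∈ I j})
    (hI : ∀ k, I (k+1) = {x | ∀ y, att y x → ∃ j, 1 ≤ j ∧ j ≤ k+1 ∧ y ∈ O j})
    (Lgr : Ar → Label)
    (hgrin : ∀ x, Lgr x = Label.inn ↔ ∃ k, x ∈ I k)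
    (hgrout : ∀ x, Lgr x = Label.out ↔ ∃ k, x ∈ O k)
    (MM : Ar → ℕ)
    (hMMin : ∀ x, Lgr x = Label.inn → MM x = 2 * sInf {k | x ∈ I k} + 1)
    (hMMout : ∀ x, Lgr x = Label.out → MM x = 2 * sInf {k | x ∈ O k}) :
    IsMinMax att Lgr MM := by
  have h : IsBreadthFirst att I O := ⟨hI0, hO0, hO, hI⟩
  have out_image (x : Ar) : MM '' {y | att y x ∧ Lgr y = Label.out} =
      (fun y => 2 * firstIndex O y) '' {y | att y x ∧ ∃ k, y ∈ O k} := by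
    simp_rw [← hgrout]
    exact Set.image_congr fun y hy => hMMout y hy.2
  have in_image (x : Ar) : MM '' {y | att y x ∧ Lgr y = Label.inn} =
      (fun y => 2 * firstIndex I y + 1) '' {y | att y x ∧ ∃ k, y ∈ I k} := by
    simp_rw [← hgrin]
    exact Set.image_congr fun y hy => hMMin y hy.2
  refine ⟨fun x hx => ?_, fun x hx => ?_⟩
  · rw [hMMin x hx, out_image, h.sSup_outAttackers ((hgrin x).1 hx), firstIndex]
  · rw [hMMout x hx, in_image, h.sInf_inAttackers_add_one ((hgrout x).1 hx), firstIndex]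

/-- In the breadth-first construction, numbering in-arguments by 2k+1
(k minimal with x ∈ I k) and out-arguments by 2k (k minimal with x ∈ O k) gives a
valid min-max numbering of the grounded labelling. -/
theorem breadthFirst_minMax
    {Ar : Type*} [Fintype Ar] (att : Ar → Ar → Prop)
    (I O : ℕ → Set Ar)
    (hI0 : I 0 = {x | ∀ y, ¬ att y x})
    (hO0 : O 0 = ∅)
    (hO : ∀ k, O (k+1) = {y | ∃ x, att x y ∧ ∃ j ≤ k, x ∈ I j})
    (hI : ∀ k, I (k+1) = {x | ∀ y, att y x → ∃ j, 1 ≤ j ∧ j ≤ k+1 ∧ y ∈ O j})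
    (Lgr : Ar → Label)
    (hgrin : ∀ x, Lgr x = Label.inn ↔ ∃ k, x ∈ I k)
    (hgrout : ∀ x, Lgr x = Label.out ↔ ∃ k, x ∈ O k)
    (MM : Ar → ℕ)
    (hMMin : ∀ x, Lgr x = Label.inn → MM x = 2 * sInf {k | x ∈ I k} + 1)
    (hMMout : ∀ x, Lgr x = Label.out → MM x = 2 * sInf {k | x ∈ O k}) :
    IsMinMax att Lgr MM :=
  breadthFirst_minMax_general att I O hI0 hO0 hO hI Lgr hgrin hgrout MM hMMin hMMout
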